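/- arXiv:1803.09224 — 2 statements merged into one kernel-verified Lean document; each statement's English description precedes it below -/
import Mathlib

section
/- For every ρ ∈ [0,ρ₀], every d ∈ X, and every dual-feasible point u, weak duality holds: D(u,ρ) ≤ J(d,ρ). -/
open scoped RealInnerProductSpace
open Finset

noncomputable section

/-- `ℝⁿ` with the Euclidean norm. -/
abbrev Evec (n : ℕ) : Type := EuclideanSpace ℝ (Fin n)

variable {n m : ℕ}

/-- Apply a matrix to a Euclidean vector. -/
def matApply (M : Matrix (Fin n) (Fin n) ℝ) (x : Evec n) : Evec n := Matrix.toEuclideanLin M x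

/-- ℓ2 operator norm of a matrix. -/
def opNorm (M : Matrix (Fin n) (Fin n) ℝ) : ℝ :=
  ‖(LinearMap.toContinuousLinearMap (Matrix.toEuclideanLin M))‖

/-- `H_ρ := ρ H_f + H_0`. -/
def Hmat (Hf H0 : Matrix (Fin n) (Fin n) ℝ) (ρ : ℝ) : Matrix (Fin n) (Fin n) ℝ := ρ • Hf + H0

/-- `l(d,0) = Σ_{i≤m̄} |⟨aⁱ,d⟩+bᵢ| + Σ_{i>m̄} max(⟨aⁱ,d⟩+bᵢ,0)` (indices `i.val < mbar` are
the equality constraints). Note `lpen mbar a b 0 = J⁰`. -/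
def lpen (mbar : ℕ) (a : Fin m → Evec n) (b : Fin m → ℝ) (d : Evec n) : ℝ :=
  ∑ i : Fin m, if (i : ℕ) < mbar then |⟪a i, d⟫ + b i| else max (⟪a i, d⟫ + b i) 0

/-- `J(d,ρ) = ρ⟨g,d⟩ + ½⟨d,H_ρ d⟩ + l(d,0)`. -/
def Jval (mbar : ℕ) (g : Evec n) (a : Fin m → Evec n) (b : Fin m → ℝ)
    (Hf H0 : Matrix (Fin n) (Fin n) ℝ) (ρ : ℝ) (d : Evec n) : ℝ :=
  ρ * ⟪g, d⟫ + (1/2) * ⟪d, matApply (Hmat Hf H0 ρ) d⟫ + lpen mbar a b d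

/-- `āⁱ := aⁱ/‖aⁱ‖`. -/
def abar (a : Fin m → Evec n) (i : Fin m) : Evec n := ‖a i‖⁻¹ • a i

/-- `b̄ᵢ := bᵢ/‖aⁱ‖`. -/
def bbar (a : Fin m → Evec n) (b : Fin m → ℝ) (i : Fin m) : ℝ := b i / ‖a i‖

/-- `Cᵢ`: hyperplane for equality constraints, half-space for inequality constraints. -/
def Cset (mbar : ℕ) (a : Fin m → Evec n) (b : Fin m → ℝ) (i : Fin m) : Set (Evec n) :=
  if (i : ℕ) < mbar then {d | ⟪abar a i, d⟫ + bbar a b i = 0}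
  else {d | ⟪abar a i, d⟫ + bbar a b i ≤ 0}

/-- Real-valued support function `δ*(y|C) = sup_{z∈C} ⟨y,z⟫` (via `sSup`). -/
def suppFn (y : Evec n) (C : Set (Evec n)) : ℝ := sSup ((fun z => ⟪y, z⟫) '' C)

/-- Dual feasibility: `u⁰ + Σᵢ ‖aⁱ‖ uⁱ + u^{m+1} = 0` and `‖uⁱ‖ ≤ 1` for `i = 1,…,m`. -/
def DualFeasible (a : Fin m → Evec n) (u0 : Evec n) (u : Fin m → Evec n) (um1 : Evec n) : Prop :=
  (u0 + ∑ i, ‖a i‖ • u i + um1 = 0) ∧ ∀ i, ‖u i‖ ≤ 1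

/-- Real-valued dual objective
`D(u,ρ) = -½⟨u⁰-ρg, H_ρ⁻¹(u⁰-ρg)⟩ - Σᵢ ‖aⁱ‖ δ*(uⁱ|Cᵢ) - δ*(u^{m+1}|X)`. -/
def Dval (mbar : ℕ) (g : Evec n) (a : Fin m → Evec n) (b : Fin m → ℝ)
    (Hf H0 : Matrix (Fin n) (Fin n) ℝ) (X : Set (Evec n)) (ρ : ℝ)
    (u0 : Evec n) (u : Fin m → Evec n) (um1 : Evec n) : ℝ :=
  -(1/2) * ⟪u0 - ρ • g, matApply (Hmat Hf H0 ρ)⁻¹ (u0 - ρ • g)⟫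
    - ∑ i, ‖a i‖ * suppFn (u i) (Cset mbar a b i)
    - suppFn um1 X

/-- Extended-real-valued support function. -/
def suppFnE (y : Evec n) (C : Set (Evec n)) : EReal :=
  ⨆ z ∈ C, ((⟪y, z⟫ : ℝ) : EReal)

/-- Extended-real-valued dual objective (value in `ℝ ∪ {±∞}`; it is `-∞` when a support
function is `+∞`). -/
def DvalE (mbar : ℕ) (g : Evec n) (a : Fin m → Evec n) (b : Fin m → ℝ)
    (Hf H0 : Matrix (Fin n) (Fin n) ℝ) (X : Set (Evec n)) (ρ : ℝ)
    (u0 : Evec n) (u : Fin m → Evec n) (um1 : Evec n) : EReal :=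
  ((-(1/2) * ⟪u0 - ρ • g, matApply (Hmat Hf H0 ρ)⁻¹ (u0 - ρ • g)⟫ : ℝ) : EReal)
    - ∑ i, (‖a i‖ : EReal) * suppFnE (u i) (Cset mbar a b i)
    - suppFnE um1 X

/-! Weak duality is the sum of three Fenchel–Young inequalities, one per block of the dual point.
For the quadratic part, `-½⟨w, H⁻¹w⟩ ≤ ½⟨d, Hd⟩ - ⟨w, d⟩` with `w = u⁰ - ρg`. For constraint `i`,
the penalty at `d` is `‖aⁱ‖ · dist(d, Cᵢ)`, so moving `d` to its projection `z` onto `Cᵢ` and using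
`‖uⁱ‖ ≤ 1` gives `‖aⁱ‖⟨uⁱ, d⟩ - penalty ≤ ‖aⁱ‖⟨uⁱ, z⟩ ≤ ‖aⁱ‖ δ*(uⁱ|Cᵢ)`. Finally
`⟨u^{m+1}, d⟩ ≤ δ*(u^{m+1}|X)` because `d ∈ X`. Adding the three, dual feasibility makes the terms
linear in `d` cancel. -/

theorem LinearMap.IsPositive.neg_half_inner_le {E : Type*} [NormedAddCommGroup E]
    [InnerProductSpace ℝ E] {T S : E →ₗ[ℝ] E} (hT : T.IsPositive) (hTS : ∀ w, T (S w) = w)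
    (w d : E) : -(1/2) * ⟪w, S w⟫ ≤ 1/2 * ⟪d, T d⟫ - ⟪w, d⟫ := by
  have hsymm : ⟪S w, T d⟫ = ⟪w, d⟫ := by rw [← hT.isSymmetric, hTS]
  have hsq := hT.inner_nonneg_right (d - S w)
  simp only [map_sub, hTS, inner_sub_left, inner_sub_right] at hsq
  rw [real_inner_comm w d, real_inner_comm w (S w), hsymm] at hsq
  linarith

theorem Matrix.PosDef.neg_half_inner_inv_le {M : Matrix (Fin n) (Fin n) ℝ} (hM : M.PosDef)
    (w d : Evec n) : -(1/2) * ⟪w, matApply M⁻¹ w⟫ ≤ 1/2 * ⟪d, matApply M d⟫ - ⟪w, d⟫ := by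
  refine (Matrix.isPositive_toEuclideanLin_iff.mpr hM.posSemidef).neg_half_inner_le
    (fun w => ?_) w d
  rw [← LinearMap.comp_apply, ← Matrix.toLpLin_mul_same,
    Matrix.mul_nonsing_inv _ (M.isUnit_iff_isUnit_det.mp hM.isUnit), Matrix.toLpLin_one,
    LinearMap.id_apply]

theorem exists_inner_eq_sub_and_norm_mul_norm_sub_eq {E : Type*} [NormedAddCommGroup E]
    [InnerProductSpace ℝ E] {a : E} (ha : a ≠ 0) (d : E) (t : ℝ) :
    ∃ z, ⟪a, z⟫ = ⟪a, d⟫ - t ∧ ‖a‖ * ‖d - z‖ = |t| := by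
  have ha' : ‖a‖ ≠ 0 := norm_ne_zero_iff.mpr ha
  refine ⟨d - (t / ‖a‖ ^ 2) • a, ?_, ?_⟩
  · rw [inner_sub_right, real_inner_smul_right, real_inner_self_eq_norm_sq, div_mul_cancel₀ _
      (pow_ne_zero 2 ha')]
  · rw [sub_sub_cancel, norm_smul, Real.norm_eq_abs, abs_div, abs_of_nonneg (sq_nonneg ‖a‖)]
    field_simp

def penTerm (mbar : ℕ) (a : Fin m → Evec n) (b : Fin m → ℝ) (d : Evec n) (i : Fin m) : ℝ :=
  if (i : ℕ) < mbar then |⟪a i, d⟫ + b i| else max (⟪a i, d⟫ + b i) 0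

theorem lpen_eq_sum_penTerm (mbar : ℕ) (a : Fin m → Evec n) (b : Fin m → ℝ) (d : Evec n) :
    lpen mbar a b d = ∑ i, penTerm mbar a b d i := rfl

theorem inner_abar_add_bbar {a : Fin m → Evec n} {i : Fin m} (ha : a i ≠ 0) (b : Fin m → ℝ)
    (z : Evec n) : ⟪abar a i, z⟫ + bbar a b i = (⟪a i, z⟫ + b i) / ‖a i‖ := by
  have : ‖a i‖ ≠ 0 := norm_ne_zero_iff.mpr ha
  simp only [abar, bbar, real_inner_smul_left]
  field_simp

theorem exists_mem_Cset_norm_mul_norm_sub_eq (mbar : ℕ) {a : Fin m → Evec n} {i : Fin m}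
    (ha : a i ≠ 0) (b : Fin m → ℝ) (d : Evec n) :
    ∃ z ∈ Cset mbar a b i, ‖a i‖ * ‖d - z‖ = penTerm mbar a b d i := by
  have hna : 0 < ‖a i‖ := norm_pos_iff.mpr ha
  simp only [Cset, penTerm]
  split_ifs
  · obtain ⟨z, hz, hdist⟩ := exists_inner_eq_sub_and_norm_mul_norm_sub_eq ha d (⟪a i, d⟫ + b i)
    refine ⟨z, ?_, hdist⟩
    simp [inner_abar_add_bbar ha, hz]
  · obtain ⟨z, hz, hdist⟩ :=
      exists_inner_eq_sub_and_norm_mul_norm_sub_eq ha d (max (⟪a i, d⟫ + b i) 0)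
    refine ⟨z, ?_, hdist.trans (abs_of_nonneg (le_max_right _ _))⟩
    simp only [Set.mem_ofPred_eq, inner_abar_add_bbar ha, hz]
    exact div_nonpos_of_nonpos_of_nonneg (by linarith [le_max_left (⟪a i, d⟫ + b i) 0]) hna.le

theorem inner_le_suppFnE {y z : Evec n} {C : Set (Evec n)} (hz : z ∈ C) :
    ((⟪y, z⟫ : ℝ) : EReal) ≤ suppFnE y C :=
  le_iSup₂ (f := fun w (_ : w ∈ C) => ((⟪y, w⟫ : ℝ) : EReal)) z hz

theorem coe_mul_inner_sub_le_mul_suppFnE {c p : ℝ} (hc : 0 ≤ c) {y z d : Evec n}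
    {C : Set (Evec n)} (hy : ‖y‖ ≤ 1) (hz : z ∈ C) (hp : c * ‖d - z‖ ≤ p) :
    ((c * ⟪y, d⟫ - p : ℝ) : EReal) ≤ c * suppFnE y C := by
  have hyz : ⟪y, d - z⟫ ≤ ‖d - z‖ :=
    (real_inner_le_norm _ _).trans (mul_le_of_le_one_left (norm_nonneg _) hy)
  have hle : c * ⟪y, d⟫ - p ≤ c * ⟪y, z⟫ := by
    rw [inner_sub_right] at hyz
    linarith [mul_le_mul_of_nonneg_left hyz hc, mul_sub c ⟪y, d⟫ ⟪y, z⟫]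
  calc ((c * ⟪y, d⟫ - p : ℝ) : EReal)
      ≤ ((c * ⟪y, z⟫ : ℝ) : EReal) := EReal.coe_le_coe_iff.mpr hle
    _ = (c : EReal) * ((⟪y, z⟫ : ℝ) : EReal) := EReal.coe_mul _ _
    _ ≤ c * suppFnE y C :=
      mul_le_mul_of_nonneg_left (inner_le_suppFnE hz) (EReal.coe_nonneg.mpr hc)

theorem EReal.coe_finset_sum {ι : Type*} (s : Finset ι) (f : ι → ℝ) :
    ((∑ i ∈ s, f i : ℝ) : EReal) = ∑ i ∈ s, (f i : EReal) :=
  map_sum (⟨⟨Real.toEReal, EReal.coe_zero⟩, EReal.coe_add⟩ : ℝ →+ EReal) f s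

theorem coe_sum_mul_inner_sub_penTerm_le (mbar : ℕ) {a : Fin m → Evec n} (ha : ∀ i, a i ≠ 0)
    (b : Fin m → ℝ) {u : Fin m → Evec n} (hu : ∀ i, ‖u i‖ ≤ 1) (d : Evec n) :
    ((∑ i, (‖a i‖ * ⟪u i, d⟫ - penTerm mbar a b d i) : ℝ) : EReal)
      ≤ ∑ i, (‖a i‖ : EReal) * suppFnE (u i) (Cset mbar a b i) := by
  rw [EReal.coe_finset_sum]
  refine Finset.sum_le_sum fun i _ => ?_
  obtain ⟨z, hz, hdist⟩ := exists_mem_Cset_norm_mul_norm_sub_eq mbar (ha i) b d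
  exact coe_mul_inner_sub_le_mul_suppFnE (norm_nonneg _) (hu i) hz hdist.le

theorem DualFeasible.inner_add_sum_add_inner_eq_zero {a : Fin m → Evec n} {u0 um1 : Evec n}
    {u : Fin m → Evec n} (h : DualFeasible a u0 u um1) (d : Evec n) :
    ⟪u0, d⟫ + ∑ i, ‖a i‖ * ⟪u i, d⟫ + ⟪um1, d⟫ = 0 := by
  have := congrArg (⟪·, d⟫) h.1
  simpa only [inner_add_left, sum_inner, real_inner_smul_left, inner_zero_left] using this

theorem statement_5_general
    (n m mbar : ℕ)
    (g : Evec n) (a : Fin m → Evec n) (ha : ∀ i, a i ≠ 0) (b : Fin m → ℝ)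
    (Hf H0 : Matrix (Fin n) (Fin n) ℝ)
    (ρ₀ : ℝ)
    (hpos : ∀ ρ ∈ Set.Icc (0:ℝ) ρ₀, (Hmat Hf H0 ρ).PosDef)
    (X : Set (Evec n)) :
    ∀ ρ ∈ Set.Icc (0:ℝ) ρ₀, ∀ d ∈ X,
      ∀ (u0 : Evec n) (u : Fin m → Evec n) (um1 : Evec n),
        DualFeasible a u0 u um1 →
        DvalE mbar g a b Hf H0 X ρ u0 u um1 ≤ ((Jval mbar g a b Hf H0 ρ d : ℝ) : EReal) := by
  intro ρ hρ d hd u0 u um1 hfeas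
  have hC := coe_sum_mul_inner_sub_penTerm_le mbar ha b hfeas.2 d
  have hX : ((⟪um1, d⟫ : ℝ) : EReal) ≤ suppFnE um1 X := inner_le_suppFnE hd
  have hquad := (hpos ρ hρ).neg_half_inner_inv_le (u0 - ρ • g) d
  have hsum := hfeas.inner_add_sum_add_inner_eq_zero d
  calc DvalE mbar g a b Hf H0 X ρ u0 u um1
      ≤ ((-(1/2) * ⟪u0 - ρ • g, matApply (Hmat Hf H0 ρ)⁻¹ (u0 - ρ • g)⟫
          - ∑ i, (‖a i‖ * ⟪u i, d⟫ - penTerm mbar a b d i) - ⟪um1, d⟫ : ℝ) : EReal) := by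
        rw [EReal.coe_sub, EReal.coe_sub]
        exact EReal.sub_le_sub (EReal.sub_le_sub le_rfl hC) hX
    _ ≤ ((Jval mbar g a b Hf H0 ρ d : ℝ) : EReal) := by
        refine EReal.coe_le_coe_iff.mpr ?_
        rw [Jval, lpen_eq_sum_penTerm, Finset.sum_sub_distrib]
        have hlin : ⟪u0 - ρ • g, d⟫ = ⟪u0, d⟫ - ρ * ⟪g, d⟫ := by
          rw [inner_sub_left, real_inner_smul_left]
        linarith

/-- For every `ρ ∈ [0,ρ₀]`, every `d ∈ X`, and every dual-feasible point `u`,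
weak duality holds: `D(u,ρ) ≤ J(d,ρ)` (with `D` taking values in `ℝ ∪ {−∞}`, formalized
with extended reals). -/
theorem statement_5
    (n m mbar : ℕ) (hn : 1 ≤ n) (hmm : mbar ≤ m)
    (g : Evec n) (a : Fin m → Evec n) (ha : ∀ i, a i ≠ 0) (b : Fin m → ℝ)
    (Hf H0 : Matrix (Fin n) (Fin n) ℝ) (hHf : Hf.IsHermitian) (hH0 : H0.IsHermitian)
    (ρ₀ : ℝ) (hρ₀ : 0 < ρ₀)
    (hpos : ∀ ρ ∈ Set.Icc (0:ℝ) ρ₀, (Hmat Hf H0 ρ).PosDef)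
    (X : Set (Evec n)) (hXne : X.Nonempty) (hXcp : IsCompact X)
    (hXcv : Convex ℝ X) (hX0 : (0 : Evec n) ∈ X) :
    ∀ ρ ∈ Set.Icc (0:ℝ) ρ₀, ∀ d ∈ X,
      ∀ (u0 : Evec n) (u : Fin m → Evec n) (um1 : Evec n),
        DualFeasible a u0 u um1 →
        DvalE mbar g a b Hf H0 X ρ u0 u um1 ≤ ((Jval mbar g a b Hf H0 ρ d : ℝ) : EReal) :=
  statement_5_general n m mbar g a ha b Hf H0 ρ₀ hpos X
end
end

section
/- Let β_v ∈ (0,1) and ρ ∈ [0,ρ₀]. Let u = (u⁰,u¹,…,uᵐ,u^{m+1}) be a dual-feasible point such that for each i ∈ {1,…,m}, uⁱ = ζᵢāⁱ with ζᵢ ∈ [−1,1] for i ≤ m̄ and ζᵢ ∈ [0,1] for i > m̄, and |ζᵢ| ≤ β_v for all i. Then J⁰ − D(u,ρ) ≥ (1 − β_v) · J⁰. -/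
open scoped RealInnerProductSpace
open Finset

noncomputable section

variable {n m : ℕ}

/-! The quadratic term of `D` is nonpositive because `H_ρ⁻¹` is positive definite, and the
support-function term of `X` is nonpositive because `0 ∈ X`. The support function of `ζᵢāⁱ` on
the hyperplane or half-space `Cᵢ` is attained at the foot point `-b̄ᵢāⁱ` (for the half-space this
needs `ζᵢ ≥ 0`), so `‖aⁱ‖δ*(uⁱ|Cᵢ) = -ζᵢbᵢ`. Hence `D(u,ρ) ≤ Σᵢ ζᵢbᵢ`, and `|ζᵢ| ≤ β_v` bounds each
summand by `β_v` times the corresponding summand of `J⁰`. -/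

lemma inner_matApply_self_nonneg {M : Matrix (Fin n) (Fin n) ℝ} (hM : M.PosSemidef)
    (x : Evec n) : 0 ≤ ⟪x, matApply M x⟫ := by
  simpa [matApply, Matrix.toLpLin_apply, EuclideanSpace.inner_eq_star_dotProduct,
    dotProduct_comm] using hM.re_dotProduct_nonneg ((WithLp.equiv 2 (Fin n → ℝ)) x)

lemma inner_le_suppFn {C : Set (Evec n)} (hC : Bornology.IsBounded C) (y : Evec n) {z : Evec n}
    (hz : z ∈ C) : ⟪y, z⟫ ≤ suppFn y C := by
  refine le_csSup ?_ ⟨z, hz, rfl⟩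
  obtain ⟨R, hR⟩ := hC.subset_closedBall 0
  refine ⟨‖y‖ * R, ?_⟩
  rintro _ ⟨w, hw, rfl⟩
  have hwR : ‖w‖ ≤ R := by simpa using hR hw
  exact (real_inner_le_norm y w).trans (mul_le_mul_of_nonneg_left hwR (norm_nonneg y))

lemma suppFn_nonneg_of_zero_mem {C : Set (Evec n)} (hC : Bornology.IsBounded C)
    (h0 : (0 : Evec n) ∈ C) (y : Evec n) : 0 ≤ suppFn y C := by
  simpa using inner_le_suppFn hC y h0

section UnitNormal

variable {e : Evec n} (t c : ℝ)

lemma inner_smul_foot_point (he : ‖e‖ = 1) : ⟪t • e, (-c) • e⟫ = -(t * c) := by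
  rw [real_inner_smul_left, real_inner_smul_right, real_inner_self_eq_norm_sq, he]; ring

lemma inner_foot_point_add (he : ‖e‖ = 1) : ⟪e, (-c) • e⟫ + c = 0 := by
  rw [real_inner_smul_right, real_inner_self_eq_norm_sq, he]; ring

lemma suppFn_smul_hyperplane (he : ‖e‖ = 1) :
    suppFn (t • e) {d | ⟪e, d⟫ + c = 0} = -(t * c) := by
  refine IsGreatest.csSup_eq
    ⟨⟨(-c) • e, inner_foot_point_add c he, inner_smul_foot_point t c he⟩, ?_⟩
  rintro _ ⟨z, hz : ⟪e, z⟫ + c = 0, rfl⟩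
  change ⟪t • e, z⟫ ≤ _
  rw [real_inner_smul_left, show ⟪e, z⟫ = -c by linarith]
  linarith

lemma suppFn_smul_halfspace (he : ‖e‖ = 1) (ht : 0 ≤ t) :
    suppFn (t • e) {d | ⟪e, d⟫ + c ≤ 0} = -(t * c) := by
  refine IsGreatest.csSup_eq
    ⟨⟨(-c) • e, (inner_foot_point_add c he).le, inner_smul_foot_point t c he⟩, ?_⟩
  rintro _ ⟨z, hz : ⟪e, z⟫ + c ≤ 0, rfl⟩
  change ⟪t • e, z⟫ ≤ _
  rw [real_inner_smul_left]
  nlinarith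

end UnitNormal

lemma norm_abar {a : Fin m → Evec n} {i : Fin m} (hai : a i ≠ 0) : ‖abar a i‖ = 1 := by
  rw [abar, norm_smul, norm_inv, norm_norm, inv_mul_cancel₀ (norm_ne_zero_iff.2 hai)]

lemma norm_mul_suppFn_Cset (mbar : ℕ) {a : Fin m → Evec n} (b : Fin m → ℝ) {i : Fin m}
    (hai : a i ≠ 0) {t : ℝ} (ht : mbar ≤ (i : ℕ) → 0 ≤ t) :
    ‖a i‖ * suppFn (t • abar a i) (Cset mbar a b i) = -(t * b i) := by
  have hsupp : suppFn (t • abar a i) (Cset mbar a b i) = -(t * bbar a b i) := by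
    unfold Cset
    split_ifs with hi
    · exact suppFn_smul_hyperplane t _ (norm_abar hai)
    · exact suppFn_smul_halfspace t _ (norm_abar hai) (ht (not_lt.mp hi))
  rw [hsupp, bbar]
  field_simp [norm_ne_zero_iff.2 hai]

lemma lpen_zero (mbar : ℕ) (a : Fin m → Evec n) (b : Fin m → ℝ) :
    lpen mbar a b 0 = ∑ i : Fin m, if (i : ℕ) < mbar then |b i| else max (b i) 0 := by
  simp [lpen]

lemma sum_mul_le_mul_lpen_zero (mbar : ℕ) (a : Fin m → Evec n) (b : Fin m → ℝ) {β : ℝ}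
    {ζ : Fin m → ℝ} (hζI : ∀ i : Fin m, mbar ≤ (i : ℕ) → 0 ≤ ζ i) (hζβ : ∀ i, |ζ i| ≤ β) :
    ∑ i, ζ i * b i ≤ β * lpen mbar a b 0 := by
  rw [lpen_zero, Finset.mul_sum]
  refine Finset.sum_le_sum fun i _ => ?_
  split_ifs with hi
  · calc ζ i * b i ≤ |ζ i| * |b i| := (le_abs_self _).trans (abs_mul _ _).le
      _ ≤ β * |b i| := mul_le_mul_of_nonneg_right (hζβ i) (abs_nonneg _)
  · have hζ0 := hζI i (not_lt.mp hi)
    have hζ := (le_abs_self (ζ i)).trans (hζβ i)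
    rcases le_total (b i) 0 with hb | hb
    · rw [max_eq_right hb]; nlinarith
    · rw [max_eq_left hb]; nlinarith

lemma Dval_le_sum_mul (mbar : ℕ) (g : Evec n) {a : Fin m → Evec n} (ha : ∀ i, a i ≠ 0)
    (b : Fin m → ℝ) {Hf H0 : Matrix (Fin n) (Fin n) ℝ} {X : Set (Evec n)} {ρ : ℝ}
    (hH : (Hmat Hf H0 ρ).PosDef) (hX : Bornology.IsBounded X) (hX0 : (0 : Evec n) ∈ X)
    (u0 um1 : Evec n) {ζ : Fin m → ℝ} (hζI : ∀ i : Fin m, mbar ≤ (i : ℕ) → 0 ≤ ζ i) :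
    Dval mbar g a b Hf H0 X ρ u0 (fun i => ζ i • abar a i) um1 ≤ ∑ i, ζ i * b i := by
  have hquad := inner_matApply_self_nonneg hH.inv.posSemidef (u0 - ρ • g)
  have hX := suppFn_nonneg_of_zero_mem hX hX0 um1
  have hCset : ∑ i, ‖a i‖ * suppFn (ζ i • abar a i) (Cset mbar a b i) = -∑ i, ζ i * b i := by
    simp only [norm_mul_suppFn_Cset mbar b (ha _) (hζI _ ·), Finset.sum_neg_distrib]
  rw [Dval, hCset]
  linarith

theorem statement_13_general
    (n m mbar : ℕ)
    (g : Evec n) (a : Fin m → Evec n) (ha : ∀ i, a i ≠ 0) (b : Fin m → ℝ)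
    (Hf H0 : Matrix (Fin n) (Fin n) ℝ)
    (ρ₀ : ℝ)
    (hpos : ∀ ρ ∈ Set.Icc (0:ℝ) ρ₀, (Hmat Hf H0 ρ).PosDef)
    (X : Set (Evec n)) (hXcp : IsCompact X)
    (hX0 : (0 : Evec n) ∈ X)
    (βv : ℝ)
    (ρ : ℝ) (hρ : ρ ∈ Set.Icc (0:ℝ) ρ₀)
    (u0 : Evec n) (u : Fin m → Evec n) (um1 : Evec n)
    (ζ : Fin m → ℝ)
    (hufrom : ∀ i, u i = ζ i • abar a i)
    (hζI : ∀ i : Fin m, mbar ≤ (i : ℕ) → ζ i ∈ Set.Icc (0 : ℝ) 1)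
    (hζβ : ∀ i, |ζ i| ≤ βv) :
    lpen mbar a b 0 - Dval mbar g a b Hf H0 X ρ u0 u um1
      ≥ (1 - βv) * lpen mbar a b 0 := by
  have hζ0 : ∀ i : Fin m, mbar ≤ (i : ℕ) → 0 ≤ ζ i := fun i hi => (hζI i hi).1
  obtain rfl : u = fun i => ζ i • abar a i := funext hufrom
  have hD := Dval_le_sum_mul mbar g ha b (hpos ρ hρ) hXcp.isBounded hX0 u0 um1 hζ0
  have hsum := sum_mul_le_mul_lpen_zero mbar a b hζ0 hζβ
  linarith

/-- Let `β_v ∈ (0,1)` and `ρ ∈ [0,ρ₀]`.  Let `u` be a dual-feasible point such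
that for each `i`, `uⁱ = ζᵢāⁱ` with `ζᵢ ∈ [−1,1]` for equality indices, `ζᵢ ∈ [0,1]` for
inequality indices, and `|ζᵢ| ≤ β_v` for all `i`.  Then `J⁰ − D(u,ρ) ≥ (1 − β_v) · J⁰`. -/
theorem statement_13
    (n m mbar : ℕ) (hn : 1 ≤ n) (hmm : mbar ≤ m)
    (g : Evec n) (a : Fin m → Evec n) (ha : ∀ i, a i ≠ 0) (b : Fin m → ℝ)
    (Hf H0 : Matrix (Fin n) (Fin n) ℝ) (hHf : Hf.IsHermitian) (hH0 : H0.IsHermitian)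
    (ρ₀ : ℝ) (hρ₀ : 0 < ρ₀)
    (hpos : ∀ ρ ∈ Set.Icc (0:ℝ) ρ₀, (Hmat Hf H0 ρ).PosDef)
    (X : Set (Evec n)) (hXne : X.Nonempty) (hXcp : IsCompact X)
    (hXcv : Convex ℝ X) (hX0 : (0 : Evec n) ∈ X)
    (βv : ℝ) (hβv : βv ∈ Set.Ioo (0:ℝ) 1)
    (ρ : ℝ) (hρ : ρ ∈ Set.Icc (0:ℝ) ρ₀)
    (u0 : Evec n) (u : Fin m → Evec n) (um1 : Evec n)
    (hu : DualFeasible a u0 u um1)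
    (ζ : Fin m → ℝ)
    (hufrom : ∀ i, u i = ζ i • abar a i)
    (hζE : ∀ i : Fin m, (i : ℕ) < mbar → ζ i ∈ Set.Icc (-1 : ℝ) 1)
    (hζI : ∀ i : Fin m, mbar ≤ (i : ℕ) → ζ i ∈ Set.Icc (0 : ℝ) 1)
    (hζβ : ∀ i, |ζ i| ≤ βv) :
    lpen mbar a b 0 - Dval mbar g a b Hf H0 X ρ u0 u um1
      ≥ (1 - βv) * lpen mbar a b 0 :=
  statement_13_general n m mbar g a ha b Hf H0 ρ₀ hpos X hXcp hX0 βv ρ hρ u0 u um1 ζ hufrom hζI hζβ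
end
end
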